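/- Let Q be a contractible space, P₁, P₂ topological spaces, G : P₁ × Q → P₂ × Q a continuous map, q₀ ∈ Q, and define F : P₁ → P₂ by F(p) = π_{P₂}(G(p, q₀)). Then G is homotopic to the product map F × id_Q : P₁ × Q → P₂ × Q. -/

import Mathlib

open ContinuousMap

/-- `Z` has covering dimension at most `n`: every open cover admits an open
refinement in which each point belongs to at most `n + 1` members. -/
def CoveringDimLE (Z : Type) [TopologicalSpace Z] (n : ℕ) : Prop :=
  ∀ (ι : Type) (U : ι → Set Z), (∀ i, IsOpen (U i)) → (⋃ i, U i) = Set.univ →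
    ∃ (κ : Type) (V : κ → Set Z), (∀ j, IsOpen (V j)) ∧ (⋃ j, V j) = Set.univ ∧
      (∀ j, ∃ i, V j ⊆ U i) ∧
      ∀ z : Z, {j | z ∈ V j}.Finite ∧ {j | z ∈ V j}.ncard ≤ n + 1

/-- `f` and `g` are `n`-homotopic: composing with any map from a space of
covering dimension at most `n` yields homotopic maps. -/
def NHomotopic (n : ℕ) {X Y : Type*} [TopologicalSpace X] [TopologicalSpace Y]
    (f g : C(X, Y)) : Prop :=
  ∀ (Z : Type) [TopologicalSpace Z], CoveringDimLE Z n →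
    ∀ h : C(Z, X), (f.comp h).Homotopic (g.comp h)

/-- `f` is an `n`-homotopy equivalence. -/
def IsNHomotopyEquiv (n : ℕ) {X Y : Type*} [TopologicalSpace X] [TopologicalSpace Y]
    (f : C(X, Y)) : Prop :=
  ∃ g : C(Y, X), NHomotopic n (g.comp f) (ContinuousMap.id X) ∧
    NHomotopic n (f.comp g) (ContinuousMap.id Y)

/-- `f` is a homotopy equivalence. -/
def IsHomotopyEquiv {X Y : Type*} [TopologicalSpace X] [TopologicalSpace Y]
    (f : C(X, Y)) : Prop :=
  ∃ g : C(Y, X), (g.comp f).Homotopic (ContinuousMap.id X) ∧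
    (f.comp g).Homotopic (ContinuousMap.id Y)

theorem stmt8 {P₁ P₂ Q : Type*} [TopologicalSpace P₁] [TopologicalSpace P₂]
    [TopologicalSpace Q] [ContractibleSpace Q]
    (G : C(P₁ × Q, P₂ × Q)) (q₀ : Q)
    (F : C(P₁, P₂)) (hF : ∀ p, F p = (G (p, q₀)).1) :
    G.Homotopic (F.prodMap (ContinuousMap.id Q)) := by
  obtain ⟨c, hc⟩ := id_nullhomotopic Q
  -- id_Q is homotopic to const q₀
  have hcq : (ContinuousMap.const Q c).Homotopic (ContinuousMap.const Q q₀) := by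
    have := (ContinuousMap.Homotopic.comp hc (ContinuousMap.Homotopic.refl (ContinuousMap.const Q q₀))).symm
    simpa using this
  have hq : (ContinuousMap.id Q).Homotopic (ContinuousMap.const Q q₀) := hc.trans hcq
  -- first component homotopy
  have hcomp1 : (ContinuousMap.fst.comp G :
      C(P₁ × Q, P₂)).Homotopic (F.comp ContinuousMap.fst) := by
    have hsnd : ((ContinuousMap.id Q).comp (ContinuousMap.snd : C(P₁ × Q, Q))).Homotopic
        ((ContinuousMap.const Q q₀).comp ContinuousMap.snd) :=
      ContinuousMap.Homotopic.comp hq (ContinuousMap.Homotopic.refl (ContinuousMap.snd : C(P₁ × Q, Q)))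
    have hpair : (ContinuousMap.prodMk (ContinuousMap.fst : C(P₁ × Q, P₁))
          ((ContinuousMap.id Q).comp ContinuousMap.snd)).Homotopic
        (ContinuousMap.prodMk ContinuousMap.fst
          ((ContinuousMap.const Q q₀).comp ContinuousMap.snd)) := by
      obtain ⟨H⟩ := hsnd
      exact ⟨(ContinuousMap.Homotopy.refl (ContinuousMap.fst : C(P₁ × Q, P₁))).prod H⟩
    have hG := ContinuousMap.Homotopic.comp (ContinuousMap.Homotopic.refl G) hpair
    have hGf := ContinuousMap.Homotopic.comp (ContinuousMap.Homotopic.refl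
      (ContinuousMap.fst : C(P₂ × Q, P₂))) hG
    have e1 : (ContinuousMap.fst.comp (G.comp (ContinuousMap.prodMk
        (ContinuousMap.fst : C(P₁ × Q, P₁))
        ((ContinuousMap.id Q).comp ContinuousMap.snd)))) =
        (ContinuousMap.fst.comp G : C(P₁ × Q, P₂)) := by ext ⟨p, q⟩ <;> rfl
    have e2 : (ContinuousMap.fst.comp (G.comp (ContinuousMap.prodMk
        (ContinuousMap.fst : C(P₁ × Q, P₁))
        ((ContinuousMap.const Q q₀).comp ContinuousMap.snd)))) =
        (F.comp ContinuousMap.fst : C(P₁ × Q, P₂)) := by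
      ext ⟨p, q⟩
      simp [hF]
    rw [e1, e2] at hGf
    exact hGf
  -- second component homotopy
  have hcomp2 : (ContinuousMap.snd.comp G :
      C(P₁ × Q, Q)).Homotopic (ContinuousMap.snd : C(P₁ × Q, Q)) := by
    have h1 : (ContinuousMap.snd.comp G : C(P₁ × Q, Q)).Homotopic
        (ContinuousMap.const (P₁ × Q) q₀) := by
      have := ContinuousMap.Homotopic.comp hq (ContinuousMap.Homotopic.refl
        (ContinuousMap.snd.comp G : C(P₁ × Q, Q)))
      simpa using this
    have h2 : (ContinuousMap.snd : C(P₁ × Q, Q)).Homotopic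
        (ContinuousMap.const (P₁ × Q) q₀) := by
      have := ContinuousMap.Homotopic.comp hq (ContinuousMap.Homotopic.refl
        (ContinuousMap.snd : C(P₁ × Q, Q)))
      simpa using this
    exact h1.trans h2.symm
  obtain ⟨H1⟩ := hcomp1
  obtain ⟨H2⟩ := hcomp2
  have eG : (ContinuousMap.prodMk (ContinuousMap.fst.comp G)
      (ContinuousMap.snd.comp G) : C(P₁ × Q, P₂ × Q)) = G := by ext ⟨p, q⟩ <;> rfl
  have eF : (ContinuousMap.prodMk (F.comp ContinuousMap.fst)
      (ContinuousMap.snd : C(P₁ × Q, Q))) = F.prodMap (ContinuousMap.id Q) := by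
    ext ⟨p, q⟩ <;> rfl
  have : (ContinuousMap.prodMk (ContinuousMap.fst.comp G)
      (ContinuousMap.snd.comp G)).Homotopic (ContinuousMap.prodMk
      (F.comp ContinuousMap.fst) (ContinuousMap.snd : C(P₁ × Q, Q))) := ⟨H1.prod H2⟩
  rwa [eG, eF] at this
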